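/- arXiv:0707.0425 — 4 statements merged into one kernel-verified Lean document; each statement's English description precedes it below -/
import Mathlib

section
/- For the potential V(z) = |z|²/t₀ on ℂ, the scaled one-point function (1/N)R_N^{(1)}(z) = (1/(πt₀)) Σ_{n=0}^{N-1} (N/t₀)^n |z|^{2n}/n! · e^{-N|z|²/t₀} converges as N → ∞ to 1/(πt₀) if |z|² < t₀, to 1/(2πt₀) if |z|² = t₀, and to 0 if |z|² > t₀. -/
/-!
Put `r = ‖z‖² / t₀` and `a = N r`; the sum is then `e^{-a} ∑_{n<N} aⁿ/n!`, the probability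
that a Poisson variable of mean `a` is smaller than `N`. Consecutive terms `aⁿ/n!` have ratio
`a/(n+1)`, so for `r < 1` the tail `∑_{n≥N}` and for `r > 1` the head `∑_{n<N}` are bounded by
a geometric series times the boundary term `e^{-a} a^N/N! ≤ (r e^{1-r})^N` (as `N^N/N! ≤ e^N`),
which decays because `r e^{1-r} < 1` for `r ≠ 1`. At `r = 1`, a Poisson variable of mean `N`
is a sum of `N` independent Poisson variables of mean `1`, so by the central limit theorem the
probability that it is smaller than its mean tends to the probability `1/2` that a centred
Gaussian is negative.
-/

open Filter Topology MeasureTheory ProbabilityTheory Real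
open scoped NNReal ENNReal Nat

lemma hasSum_pow_div_factorial (x : ℝ) : HasSum (fun n : ℕ => x ^ n / n !) (exp x) := by
  simpa [Real.exp_eq_exp_ℝ] using NormedSpace.expSeries_div_hasSum_exp x

lemma exp_sub_sum_range_pow_div_factorial_le {a ρ : ℝ} {N : ℕ} (ha : 0 ≤ a) (hρ : ρ < 1)
    (haρ : a ≤ ρ * (N + 1)) :
    exp a - ∑ n ∈ Finset.range N, a ^ n / n ! ≤ a ^ N / N ! / (1 - ρ) := by
  have hρ0 : 0 ≤ ρ := nonneg_of_mul_nonneg_left (ha.trans haρ) (by positivity)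
  have hterm (k : ℕ) : a ^ (k + N) / (k + N)! ≤ a ^ N / N ! * ρ ^ k := by
    have hfac : (N ! : ℝ) * (N + 1) ^ k ≤ (k + N)! := by
      rw [add_comm k N]; exact_mod_cast Nat.factorial_mul_pow_le_factorial
    calc a ^ (k + N) / (k + N)! ≤ a ^ (k + N) / (N ! * (N + 1) ^ k) :=
          div_le_div_of_nonneg_left (by positivity) (by positivity) hfac
      _ = a ^ N / N ! * (a / (N + 1)) ^ k := by rw [div_pow, pow_add]; field_simp
      _ ≤ a ^ N / N ! * ρ ^ k := by
          gcongr
          rwa [div_le_iff₀ (by positivity)]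
  have hsum := (hasSum_pow_div_factorial a).summable
  rw [← (hasSum_pow_div_factorial a).tsum_eq, ← hsum.sum_add_tsum_nat_add N,
    add_sub_cancel_left]
  calc ∑' k, a ^ (k + N) / (k + N)! ≤ ∑' k, a ^ N / N ! * ρ ^ k :=
        Summable.tsum_le_tsum hterm ((summable_nat_add_iff N).2 hsum)
          ((summable_geometric_of_lt_one hρ0 hρ).mul_left _)
    _ = a ^ N / N ! / (1 - ρ) := by
        rw [tsum_mul_left, tsum_geometric_of_lt_one hρ0 hρ, ← div_eq_mul_inv]

lemma sum_range_pow_div_factorial_le {a ρ : ℝ} {N : ℕ} (ha : 0 ≤ a) (hρ0 : 0 ≤ ρ) (hρ : ρ < 1)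
    (hNa : N ≤ ρ * a) :
    ∑ n ∈ Finset.range N, a ^ n / n ! ≤ a ^ N / N ! * (ρ / (1 - ρ)) := by
  have hterm (j : ℕ) (hj : j ≤ N) : a ^ (N - j) / (N - j)! ≤ a ^ N / N ! * ρ ^ j := by
    have hfac : (N ! : ℝ) ≤ (N - j)! * (ρ * a) ^ j := by
      calc (N ! : ℝ) = (N - j)! * N.descFactorial j := by
            exact_mod_cast (Nat.factorial_mul_descFactorial hj).symm
        _ ≤ (N - j)! * (N : ℝ) ^ j := by
            gcongr; exact_mod_cast Nat.descFactorial_le_pow N j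
        _ ≤ (N - j)! * (ρ * a) ^ j := by gcongr
    rw [div_le_iff₀ (by positivity), div_mul_eq_mul_div, div_mul_eq_mul_div,
      le_div_iff₀ (by positivity)]
    calc a ^ (N - j) * N ! ≤ a ^ (N - j) * ((N - j)! * (ρ * a) ^ j) := by gcongr
      _ = a ^ (N - j + j) * ρ ^ j * (N - j)! := by ring
      _ = a ^ N * ρ ^ j * (N - j)! := by rw [Nat.sub_add_cancel hj]
  rw [← Finset.sum_range_reflect]
  calc ∑ j ∈ Finset.range N, a ^ (N - 1 - j) / (N - 1 - j)!
      ≤ ∑ j ∈ Finset.range N, a ^ N / N ! * ρ * ρ ^ j := by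
        refine Finset.sum_le_sum fun j hj => ?_
        have hj := Finset.mem_range.1 hj
        rw [show N - 1 - j = N - (j + 1) by omega, mul_assoc, ← pow_succ']
        exact hterm (j + 1) hj
    _ = a ^ N / N ! * ρ * ∑ j ∈ Finset.Ico 0 N, ρ ^ j := by
        rw [← Finset.mul_sum, Finset.range_eq_Ico]
    _ ≤ a ^ N / N ! * ρ * (ρ ^ 0 / (1 - ρ)) := by
        gcongr; exact geom_sum_Ico_le_of_lt_one hρ0 hρ
    _ = a ^ N / N ! * (ρ / (1 - ρ)) := by ring

lemma mul_exp_one_sub_lt_one {r : ℝ} (hr : r ≠ 1) : r * exp (1 - r) < 1 := by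
  have h := add_one_lt_exp (sub_ne_zero.2 hr)
  rw [sub_add_cancel] at h
  calc r * exp (1 - r) < exp (r - 1) * exp (1 - r) := by gcongr
    _ = 1 := by rw [← exp_add, sub_add_sub_cancel', sub_self, exp_zero]

lemma exp_neg_mul_pow_div_factorial_le {r : ℝ} (hr : 0 ≤ r) (N : ℕ) :
    exp (-(N * r)) * ((N * r) ^ N / N !) ≤ (r * exp (1 - r)) ^ N := by
  have h := Real.pow_div_factorial_le_exp (x := N) N.cast_nonneg N
  calc exp (-(N * r)) * ((N * r) ^ N / N !)
        = exp (-(N * r)) * r ^ N * ((N : ℝ) ^ N / N !) := by ring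
    _ ≤ exp (-(N * r)) * r ^ N * exp N := by gcongr
    _ = (r * exp (1 - r)) ^ N := by
        rw [mul_pow, ← exp_nat_mul, mul_right_comm, ← exp_add]
        ring_nf

lemma tendsto_exp_neg_mul_sum_range_of_lt_one {r : ℝ} (hr0 : 0 ≤ r) (hr1 : r < 1) :
    Tendsto (fun N : ℕ => exp (-(N * r)) * ∑ n ∈ Finset.range N, (N * r) ^ n / n !) atTop
      (𝓝 1) := by
  have hgeom :=
    tendsto_pow_atTop_nhds_zero_of_lt_one (by positivity) (mul_exp_one_sub_lt_one hr1.ne)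
  have hlower : Tendsto (fun N : ℕ => 1 - (r * exp (1 - r)) ^ N / (1 - r)) atTop (𝓝 1) := by
    simpa using tendsto_const_nhds.sub (hgeom.div_const (1 - r))
  refine tendsto_of_tendsto_of_tendsto_of_le_of_le hlower tendsto_const_nhds (fun N => ?_)
    fun N => ?_
  · have htail := exp_sub_sum_range_pow_div_factorial_le (N := N) (a := N * r) (by positivity)
      hr1 (by rw [mul_comm]; gcongr; linarith)
    have hsub : 0 < 1 - r := sub_pos.2 hr1
    calc 1 - (r * exp (1 - r)) ^ N / (1 - r)
        ≤ 1 - exp (-(N * r)) * ((N * r) ^ N / N !) / (1 - r) := by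
          gcongr; exact exp_neg_mul_pow_div_factorial_le hr0 N
      _ ≤ 1 - exp (-(N * r)) * (exp (N * r) - ∑ n ∈ Finset.range N, (N * r) ^ n / n !) := by
          rw [mul_div_assoc]; gcongr
      _ = exp (-(N * r)) * ∑ n ∈ Finset.range N, (N * r) ^ n / n ! := by
          rw [mul_sub, ← exp_add, neg_add_cancel, exp_zero, sub_sub_cancel]
  · calc exp (-(N * r)) * ∑ n ∈ Finset.range N, (N * r) ^ n / n !
        ≤ exp (-(N * r)) * exp (N * r) := by
          gcongr; exact sum_le_exp_of_nonneg (by positivity) N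
      _ = 1 := by rw [← exp_add, neg_add_cancel, exp_zero]

lemma tendsto_exp_neg_mul_sum_range_of_one_lt {r : ℝ} (hr : 1 < r) :
    Tendsto (fun N : ℕ => exp (-(N * r)) * ∑ n ∈ Finset.range N, (N * r) ^ n / n !) atTop
      (𝓝 0) := by
  have hr0 : 0 ≤ r := by linarith
  have hgeom :=
    tendsto_pow_atTop_nhds_zero_of_lt_one (by positivity) (mul_exp_one_sub_lt_one hr.ne')
  have hupper := hgeom.mul_const (r⁻¹ / (1 - r⁻¹))
  rw [zero_mul] at hupper
  refine squeeze_zero (fun N => by positivity) (fun N => ?_) hupper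
  have hhead := sum_range_pow_div_factorial_le (N := N) (a := N * r) (by positivity)
    (inv_nonneg.2 hr0) (inv_lt_one_of_one_lt₀ hr)
    (by rw [mul_comm (N : ℝ) r, inv_mul_cancel_left₀ (by positivity)])
  calc exp (-(N * r)) * ∑ n ∈ Finset.range N, (N * r) ^ n / n !
      ≤ exp (-(N * r)) * ((N * r) ^ N / N ! * (r⁻¹ / (1 - r⁻¹))) := by gcongr
    _ = exp (-(N * r)) * ((N * r) ^ N / N !) * (r⁻¹ / (1 - r⁻¹)) := by ring
    _ ≤ (r * exp (1 - r)) ^ N * (r⁻¹ / (1 - r⁻¹)) := by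
        have : 0 ≤ 1 - r⁻¹ := sub_nonneg.2 (inv_le_one_of_one_le₀ hr.le)
        gcongr; exact exp_neg_mul_pow_div_factorial_le hr0 N

lemma hasSum_natCast_mul_pow_div_factorial (x : ℝ) :
    HasSum (fun n : ℕ => n * (x ^ n / n !)) (x * exp x) := by
  refine (hasSum_nat_add_iff' 1).1 ?_
  simp only [Finset.sum_range_one, Nat.cast_zero, zero_mul, sub_zero]
  refine ((hasSum_pow_div_factorial x).mul_left x).congr_fun fun n => ?_
  rw [Nat.factorial_succ, pow_succ]
  push_cast
  field_simp

lemma hasSum_natCast_sq_mul_pow_div_factorial (x : ℝ) :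
    HasSum (fun n : ℕ => n ^ 2 * (x ^ n / n !)) (x * (x + 1) * exp x) := by
  refine (hasSum_nat_add_iff' 1).1 ?_
  simp only [Finset.sum_range_one, Nat.cast_zero, zero_pow two_ne_zero, zero_mul, sub_zero]
  have h := ((hasSum_natCast_mul_pow_div_factorial x).add (hasSum_pow_div_factorial x)).mul_left x
  rw [show x * (x * exp x + exp x) = x * (x + 1) * exp x by ring] at h
  refine h.congr_fun fun n => ?_
  rw [Nat.factorial_succ, pow_succ]
  push_cast
  field_simp
  ring

lemma measureReal_Iio_map_cast_poissonMeasure (r : ℝ≥0) (N : ℕ) :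
    Po(ℝ, r).real (Set.Iio N) = exp (-r) * ∑ n ∈ Finset.range N, (r : ℝ) ^ n / n ! := by
  rw [map_measureReal_apply measurable_from_nat measurableSet_Iio]
  have hpre : (Nat.cast ⁻¹' Set.Iio (N : ℝ) : Set ℕ) = ↑(Finset.range N) := by ext; simp
  rw [hpre, ← sum_measureReal_singleton, Finset.mul_sum]
  simp only [poissonMeasure_real_singleton, mul_div_assoc]

lemma integral_map_cast_poissonMeasure_of_measurable (r : ℝ≥0) {f : ℝ → ℝ} (hf : Measurable f) :
    ∫ x, f x ∂Po(ℝ, r) = ∑' n : ℕ, exp (-r) * (r ^ n / n !) * f n := by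
  rw [integral_map .of_discrete hf.aestronglyMeasurable, integral_poissonMeasure]
  simp [mul_div_assoc]

lemma integral_id_map_cast_poissonMeasure (r : ℝ≥0) : ∫ x, x ∂Po(ℝ, r) = r := by
  rw [integral_map_cast_poissonMeasure_of_measurable r measurable_id']
  refine (((hasSum_natCast_mul_pow_div_factorial r).mul_left (exp (-r))).congr_fun
    fun n => by ring).tsum_eq.trans ?_
  rw [← mul_assoc, mul_comm _ (r : ℝ), mul_assoc, ← exp_add, neg_add_cancel, exp_zero, mul_one]

lemma integral_sq_map_cast_poissonMeasure (r : ℝ≥0) : ∫ x, x ^ 2 ∂Po(ℝ, r) = r * (r + 1) := by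
  rw [integral_map_cast_poissonMeasure_of_measurable r (measurable_id'.pow_const 2)]
  refine (((hasSum_natCast_sq_mul_pow_div_factorial r).mul_left (exp (-r))).congr_fun
    fun n => by ring).tsum_eq.trans ?_
  rw [mul_comm, mul_assoc, ← exp_add, add_neg_cancel, exp_zero, mul_one]

lemma memLp_id_two_map_cast_poissonMeasure (r : ℝ≥0) : MemLp id 2 Po(ℝ, r) := by
  rw [memLp_two_iff_integrable_sq aestronglyMeasurable_id,
    integrable_map_measure (by fun_prop) .of_discrete,
    integrable_poissonMeasure_iff]
  refine ((hasSum_natCast_sq_mul_pow_div_factorial r).mul_left (exp (-r))).summable.congr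
    fun n => ?_
  simp only [Function.comp_apply, id, Real.norm_eq_abs, abs_pow, Nat.abs_cast]
  ring

lemma variance_id_map_cast_poissonMeasure (r : ℝ≥0) : Var[id; Po(ℝ, r)] = r := by
  rw [variance_eq_sub (memLp_id_two_map_cast_poissonMeasure r)]
  simp only [Pi.pow_apply, id, integral_sq_map_cast_poissonMeasure,
    integral_id_map_cast_poissonMeasure]
  ring

lemma poissonMeasure_zero : Po(0) = Measure.dirac 0 :=
  Measure.ext_of_singleton fun n => by rcases n with _ | n <;> simp [poissonMeasure_singleton]

lemma hasLaw_sum_range_map_cast_poissonMeasure {Ω : Type*} {mΩ : MeasurableSpace Ω}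
    {P : Measure Ω} [IsProbabilityMeasure P] {X : ℕ → Ω → ℝ} {r : ℝ≥0}
    (hmeas : ∀ i, Measurable (X i)) (hindep : iIndepFun X P)
    (hX : ∀ i, HasLaw (X i) Po(ℝ, r) P) (N : ℕ) :
    HasLaw (∑ k ∈ Finset.range N, X k) Po(ℝ, N * r) P := by
  induction N with
  | zero =>
    simp only [Finset.range_zero, Finset.sum_empty, Nat.cast_zero, zero_mul, poissonMeasure_zero,
      Measure.map_dirac' measurable_from_nat]
    exact hasLaw_dirac_of_ae_eq (.of_forall fun _ => rfl)
  | succ N ih =>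
    rw [Finset.sum_range_succ, Nat.cast_succ, add_mul, one_mul]
    exact (hindep.indepFun_finsetSum_of_notMem hmeas Finset.notMem_range_self
      ).hasLaw_add_map_cast_poissonMeasure ih (hX N)

lemma gaussianReal_Iio_zero {v : ℝ≥0} (hv : v ≠ 0) : gaussianReal 0 v (Set.Iio 0) = 2⁻¹ := by
  have hsymm : gaussianReal 0 v (Set.Iio 0) = gaussianReal 0 v (Set.Ioi 0) := by
    conv_rhs => rw [← neg_zero, ← gaussianReal_map_neg (μ := 0),
      Measure.map_apply (by fun_prop) measurableSet_Ioi]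
    simp
  have hzero : gaussianReal 0 v {0} = 0 := gaussianReal_absolutelyContinuous 0 hv (by simp)
  have htotal : gaussianReal 0 v (Set.Iio 0) + gaussianReal 0 v (Set.Ioi 0) = 1 := by
    rw [← measure_union Set.Iio_disjoint_Ioi_same measurableSet_Ioi,
      Set.Iio_union_Ioi, prob_compl_eq_one_sub (measurableSet_singleton 0), hzero, tsub_zero]
  rw [← hsymm, ← two_mul] at htotal
  exact ENNReal.eq_inv_of_mul_eq_one_left (by rwa [mul_comm])

lemma tendsto_measureReal_sum_range_lt_mul_integral {Ω : Type*} {mΩ : MeasurableSpace Ω}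
    {P : Measure Ω} [IsProbabilityMeasure P] {X : ℕ → Ω → ℝ} (hX : MemLp (X 0) 2 P)
    (hvar : Var[X 0; P] ≠ 0) (hindep : iIndepFun X P) (hident : ∀ i, IdentDistrib (X i) (X 0) P P) :
    Tendsto (fun N : ℕ => P.real {ω | ∑ k ∈ Finset.range N, X k ω < N * P[X 0]}) atTop
      (𝓝 2⁻¹) := by
  set v := Var[X 0; P].toNNReal
  have hv : v ≠ 0 := by
    simpa [v, Real.toNNReal_eq_zero, not_le] using lt_of_le_of_ne (variance_nonneg _ _) hvar.symm
  have hclt := (tendstoInDistribution_inv_sqrt_mul_sum_sub (P' := gaussianReal 0 v) HasLaw.id hX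
    hindep hident).tendsto
  have hlim := ProbabilityMeasure.tendsto_measure_of_null_frontier_of_tendsto' hclt
    (E := Set.Iio 0) (by simpa using gaussianReal_absolutelyContinuous 0 hv (by simp))
  simp only [ProbabilityMeasure.coe_mk, Measure.map_id, gaussianReal_Iio_zero hv] at hlim
  have := (ENNReal.tendsto_toReal (by simp)).comp hlim
  rw [ENNReal.toReal_inv, ENNReal.toReal_ofNat] at this
  refine this.congr' ?_
  filter_upwards [eventually_gt_atTop 0] with N hN
  simp only [Function.comp_apply, measureReal_def]
  have hmeas : AEMeasurable (fun ω => ∑ k ∈ Finset.range N, X k ω) P :=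
    Finset.aemeasurable_fun_sum _ fun k _ => (hident k).aemeasurable_fst
  rw [Measure.map_apply_of_aemeasurable ((hmeas.sub_const _).const_mul _) measurableSet_Iio]
  congr 2
  ext ω
  rw [Set.mem_preimage, Set.mem_Iio, ← smul_eq_mul, smul_neg_iff_of_pos_left (by positivity),
    sub_neg, Set.mem_ofPred_eq]

lemma tendsto_exp_neg_mul_sum_range_self :
    Tendsto (fun N : ℕ => exp (-N) * ∑ n ∈ Finset.range N, (N : ℝ) ^ n / n !) atTop (𝓝 2⁻¹) := by
  obtain ⟨Ω, _, P, X, hmeas, hlaw, hindep, _⟩ := exists_iid ℕ Po(ℝ, 1)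
  have hmean : P[X 0] = 1 := by
    rw [(hlaw 0).integral_eq, integral_id_map_cast_poissonMeasure]; simp
  have hmemLp : MemLp (X 0) 2 P := by
    refine (memLp_map_measure_iff aestronglyMeasurable_id (hmeas 0).aemeasurable).1 ?_
    rw [(hlaw 0).map_eq]
    exact memLp_id_two_map_cast_poissonMeasure 1
  have hvar : Var[X 0; P] ≠ 0 := by
    rw [(hlaw 0).variance_eq, variance_id_map_cast_poissonMeasure]; simp
  refine (tendsto_measureReal_sum_range_lt_mul_integral hmemLp hvar hindep
    fun i => (hlaw i).identDistrib (hlaw 0)).congr fun N => ?_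
  have hsum := (hasLaw_sum_range_map_cast_poissonMeasure hmeas hindep hlaw N).measureReal_eq
    (p := (· < (N : ℝ))) measurableSet_Iio
  simp only [hmean, mul_one, Finset.sum_apply] at hsum ⊢
  exact hsum.trans
    ((measureReal_Iio_map_cast_poissonMeasure N N).trans (by rw [NNReal.coe_natCast]))

lemma tendsto_exp_neg_mul_sum_range {r : ℝ} (hr : 0 ≤ r) :
    Tendsto (fun N : ℕ => exp (-(N * r)) * ∑ n ∈ Finset.range N, (N * r) ^ n / n !) atTop
      (𝓝 (if r < 1 then 1 else if r = 1 then 2⁻¹ else 0)) := by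
  rcases lt_trichotomy r 1 with h | rfl | h
  · simpa [h] using tendsto_exp_neg_mul_sum_range_of_lt_one hr h
  · simpa using tendsto_exp_neg_mul_sum_range_self
  · simpa [h.not_gt, h.ne'] using tendsto_exp_neg_mul_sum_range_of_one_lt h

/-- For the potential `V(z) = |z|²/t₀` on `ℂ`, the scaled one-point function
`(1/N) R_N^{(1)}(z) = (1/(πt₀)) Σ_{n<N} (N/t₀)^n |z|^{2n}/n! · e^{-N|z|²/t₀}`
converges as `N → ∞` to `1/(πt₀)` if `|z|² < t₀`, to `1/(2πt₀)` if `|z|² = t₀`,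
and to `0` if `|z|² > t₀`. -/
theorem stmt_5 (t₀ : ℝ) (ht₀ : 0 < t₀) (z : ℂ) (f : ℕ → ℝ)
    (hf : ∀ N : ℕ, f N = 1 / (Real.pi * t₀) * Real.exp (-(N : ℝ) * ‖z‖ ^ 2 / t₀) *
      ∑ n ∈ Finset.range N, ((N : ℝ) / t₀) ^ n * ‖z‖ ^ (2 * n) / n.factorial) :
    Tendsto f atTop (nhds
      (if ‖z‖ ^ 2 < t₀ then 1 / (Real.pi * t₀)
       else if ‖z‖ ^ 2 = t₀ then 1 / (2 * Real.pi * t₀)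
       else 0)) := by
  have hr : 0 ≤ ‖z‖ ^ 2 / t₀ := by positivity
  have hf' : f = fun N : ℕ => (π * t₀)⁻¹ *
      (exp (-(N * (‖z‖ ^ 2 / t₀))) * ∑ n ∈ Finset.range N, (N * (‖z‖ ^ 2 / t₀)) ^ n / n !) := by
    funext N
    rw [hf N, one_div, mul_assoc, neg_mul, neg_div, mul_div_assoc]
    congr 3 with n
    rw [pow_mul, ← mul_pow, div_mul_eq_mul_div, mul_div_assoc]
  rw [hf']
  convert (tendsto_exp_neg_mul_sum_range hr).const_mul (π * t₀)⁻¹ using 2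
  simp only [div_lt_one ht₀, div_eq_one_iff_eq ht₀.ne']
  split_ifs <;> ring
end

section
/- For a positively oriented polynomial curve of degree d encircling the origin, parametrized by h(w) = rw + Σ_{j=0}^d a_j w^{-j}, the exterior harmonic moments t_k = (1/(2πik)) ∮_γ z̄ z^{-k} dz vanish for all k > d+1, and the enclosed area is π t₀ with t₀ = r² − Σ_{j=1}^d j|a_j|². -/
/-!
On the unit circle `conj w = w⁻¹`, so there `conj (h w)` agrees with the Laurent polynomial
`r w⁻¹ + Σ conj (a j) w ^ j`, which is holomorphic off `0`. For `k > d + 1` the resulting integrand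
is holomorphic on `1 ≤ ‖w‖` (because `h` does not vanish there) and is `O(‖w‖ ^ (d - k))` at
infinity, so its integral over the unit circle equals the integral over arbitrarily large circles,
which tends to `0`. For the area, `conj h * h'` is itself a Laurent polynomial on the circle, and
the only terms of `w⁻¹` come from pairing each term `α w ^ m` of `h` with its own derivative,
giving the residue `Σ m ‖α‖ ^ 2 = r ^ 2 - Σ j ‖a j‖ ^ 2`.
-/

open Complex ComplexConjugate Metric Filter Topology Asymptotics Bornology

section ZPow

variable {𝕜 : Type*} [NormedField 𝕜]

theorem isBigO_zpow_zpow_cobounded_of_le {m n : ℤ} (hmn : m ≤ n) :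
    (fun z : 𝕜 => z ^ m) =O[cobounded 𝕜] fun z => z ^ n := by
  refine IsBigO.of_bound 1 ?_
  filter_upwards [eventually_cobounded_le_norm 1] with z hz
  simpa only [norm_zpow, one_mul] using zpow_le_zpow_right₀ hz hmn

theorem tendsto_zpow_cobounded_nhds_zero {n : ℤ} (hn : n < 0) :
    Tendsto (fun z : 𝕜 => z ^ n) (cobounded 𝕜) (𝓝 0) := by
  rw [tendsto_zero_iff_norm_tendsto_zero]
  simp only [norm_zpow]
  exact (tendsto_zpow_atTop_zero hn).comp tendsto_norm_cobounded_atTop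

end ZPow

theorem circleIntegral_eq_zero_of_tendsto_mul_cobounded {f : ℂ → ℂ} {R : ℝ} (hR : 0 < R)
    (hf : ∀ z, R ≤ ‖z‖ → DifferentiableAt ℂ f z)
    (hlim : Tendsto (fun z => z * f z) (cobounded ℂ) (𝓝 0)) :
    ∮ z in C(0, R), f z = 0 := by
  have hmove : ∀ R', R ≤ R' → ∮ z in C(0, R'), f z = ∮ z in C(0, R), f z := fun R' hR' =>
    circleIntegral_eq_of_differentiable_on_annulus_off_countable hR hR' Set.countable_empty
      (fun z hz => (hf z (by simpa using hz.2)).continuousAt.continuousWithinAt)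
      (fun z hz => hf z (le_of_lt (by simpa using hz.1.2)))
  refine norm_le_zero_iff.mp (le_of_forall_pos_le_add fun ε hε => ?_)
  obtain ⟨M, -, hM⟩ := hasBasis_cobounded_norm.eventually_iff.mp
    (hlim.eventually (closedBall_mem_nhds 0 (div_pos hε Real.two_pi_pos)))
  set R' := max R M
  have hR' : 0 < R' := hR.trans_le (le_max_left _ _)
  have hbound : ∀ z ∈ sphere (0 : ℂ) R', ‖f z‖ ≤ ε / (2 * Real.pi) / R' := by
    intro z hz
    rw [mem_sphere_zero_iff_norm] at hz
    have := hM (show M ≤ ‖z‖ from hz ▸ le_max_right _ _)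
    rw [dist_zero_right, norm_mul, hz] at this
    rwa [le_div_iff₀ hR', mul_comm]
  calc ‖∮ z in C(0, R), f z‖ = ‖∮ z in C(0, R'), f z‖ := by rw [hmove R' (le_max_left _ _)]
    _ ≤ 2 * Real.pi * R' * (ε / (2 * Real.pi) / R') :=
      circleIntegral.norm_integral_le_of_norm_le_const hR'.le hbound
    _ = 0 + ε := by field_simp; ring

section LaurentSum

variable {ι κ : Type*} [Fintype ι] [Fintype κ]

noncomputable def laurentSum (α : ι → ℂ) (m : ι → ℤ) (w : ℂ) : ℂ :=
  ∑ i, α i * w ^ m i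

theorem laurentSum_option (c : ℂ) (n : ℤ) (α : ι → ℂ) (m : ι → ℤ) (w : ℂ) :
    laurentSum (fun i : Option ι => i.elim c α) (fun i => i.elim n m) w =
      c * w ^ n + laurentSum α m w :=
  Fintype.sum_option _

theorem laurentSum_mul (α : ι → ℂ) (m : ι → ℤ) (β : κ → ℂ) (n : κ → ℤ) {w : ℂ} (hw : w ≠ 0) :
    laurentSum α m w * laurentSum β n w =
      laurentSum (fun p : ι × κ => α p.1 * β p.2) (fun p => m p.1 + n p.2) w := by
  simp only [laurentSum, Finset.sum_mul_sum, Fintype.sum_prod_type, zpow_add₀ hw]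
  exact Fintype.sum_congr _ _ fun i => Fintype.sum_congr _ _ fun j => by ring

theorem conj_laurentSum_of_norm_eq_one (α : ι → ℂ) (m : ι → ℤ) {w : ℂ} (hw : ‖w‖ = 1) :
    conj (laurentSum α m w) = laurentSum (fun i => conj (α i)) (fun i => -m i) w := by
  simp only [laurentSum, map_sum, map_mul, map_zpow₀, ← inv_eq_conj hw, inv_zpow']

theorem hasDerivAt_laurentSum (α : ι → ℂ) (m : ι → ℤ) {w : ℂ} (hw : w ≠ 0) :
    HasDerivAt (laurentSum α m) (laurentSum (fun i => m i * α i) (fun i => m i - 1) w) w := by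
  refine HasDerivAt.fun_sum fun i _ => ?_
  have := (hasDerivAt_zpow (m i) w (Or.inl hw)).const_mul (α i)
  rwa [← mul_assoc, mul_comm (α i)] at this

theorem differentiableAt_laurentSum (α : ι → ℂ) (m : ι → ℤ) {w : ℂ} (hw : w ≠ 0) :
    DifferentiableAt ℂ (laurentSum α m) w :=
  (hasDerivAt_laurentSum α m hw).differentiableAt

theorem laurentSum_isBigO_zpow {α : ι → ℂ} {m : ι → ℤ} {n : ℤ} (hm : ∀ i, m i ≤ n) :
    laurentSum α m =O[cobounded ℂ] fun z => z ^ n := by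
  have := IsBigO.sum (s := Finset.univ) fun i _ =>
    (isBigO_zpow_zpow_cobounded_of_le (𝕜 := ℂ) (hm i)).const_mul_left (α i)
  refine this.congr_left fun w => ?_
  simp [laurentSum]

theorem isEquivalent_mul_add_laurentSum {c : ℂ} (hc : c ≠ 0) {α : ι → ℂ} {m : ι → ℤ}
    (hm : ∀ i, m i ≤ 0) :
    (fun z => c * z + laurentSum α m z) ~[cobounded ℂ] fun z => c * z := by
  have hbounded : laurentSum α m =O[cobounded ℂ] fun _ => (1 : ℂ) := by
    simpa using laurentSum_isBigO_zpow (α := α) hm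
  have hlarge : (fun _ => (1 : ℂ)) =o[cobounded ℂ] fun z => c * z := by
    refine (isLittleO_one_left_iff ℂ).mpr ?_
    simpa only [norm_mul] using
      (tendsto_norm_cobounded_atTop (E := ℂ)).const_mul_atTop (norm_pos_iff.mpr hc)
  exact IsEquivalent.refl.add_isLittleO (hbounded.trans_isLittleO hlarge)

theorem circleIntegral_laurentSum (α : ι → ℂ) (m : ι → ℤ) {R : ℝ} (hR : R ≠ 0) :
    ∮ z in C(0, R), laurentSum α m z = 2 * Real.pi * I * ∑ i with m i = -1, α i := by
  have hint : ∀ i, CircleIntegrable (fun z => α i * z ^ m i) 0 R := fun i => by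
    have := circleIntegrable_sub_zpow_iff (c := 0) (w := 0) (R := R) (n := m i)
    simp only [sub_zero] at this
    exact (this.mpr (Or.inr (Or.inr (by simpa using (abs_pos.mpr hR).ne)))).const_mul (α i)
  rw [show laurentSum α m = fun z => ∑ i, α i * z ^ m i from rfl,
    circleIntegral.integral_fun_sum fun i _ => hint i, Finset.sum_filter,
    Finset.mul_sum]
  refine Fintype.sum_congr _ _ fun i => ?_
  rw [circleIntegral.integral_const_mul]
  split_ifs with hi
  · have := circleIntegral.integral_sub_center_inv 0 hR
    simp only [sub_zero] at this
    simp only [hi, zpow_neg_one, this, mul_comm]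
  · have := circleIntegral.integral_sub_zpow_of_ne hi 0 0 R
    simp only [sub_zero] at this
    rw [this, mul_zero, mul_zero]

end LaurentSum

section LaurentCurve

variable {ι : Type*} [Fintype ι]

theorem circleIntegral_conj_mul_deriv_laurentSum {α : ι → ℂ} {m : ι → ℤ}
    (hm : Function.Injective m) :
    ∮ w in C(0, 1), conj (laurentSum α m w) * deriv (laurentSum α m) w =
      2 * Real.pi * I * ((∑ i, m i * ‖α i‖ ^ 2 : ℝ) : ℂ) := by
  have hexp : ∀ i j, -m i + (m j - 1) = -1 ↔ j = i := fun i j => by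
    rw [← hm.eq_iff]; omega
  rw [circleIntegral.integral_congr zero_le_one (g := laurentSum
      (fun p : ι × ι => conj (α p.1) * (m p.2 * α p.2)) (fun p => -m p.1 + (m p.2 - 1))),
    circleIntegral_laurentSum _ _ one_ne_zero, Finset.sum_filter, Fintype.sum_prod_type]
  · push_cast
    congr 1
    refine Fintype.sum_congr _ _ fun i => ?_
    rw [Fintype.sum_eq_single i fun j hj => if_neg ((hexp i j).not.mpr hj),
      if_pos ((hexp i i).mpr rfl), mul_left_comm, conj_mul']
  · intro w hw
    have hw1 : ‖w‖ = 1 := mem_sphere_zero_iff_norm.mp hw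
    have hw0 : w ≠ 0 := norm_ne_zero_iff.mp (by rw [hw1]; exact one_ne_zero)
    dsimp only
    rw [(hasDerivAt_laurentSum α m hw0).deriv, conj_laurentSum_of_norm_eq_one _ _ hw1,
      laurentSum_mul _ _ _ _ hw0]

theorem circleIntegral_conj_mul_zpow_mul_deriv_laurentSum_eq_zero {α : ι → ℂ} {m : ι → ℤ}
    {c : ℂ} (hequiv : laurentSum α m ~[cobounded ℂ] fun z => c * z)
    (hne : ∀ w : ℂ, 1 ≤ ‖w‖ → laurentSum α m w ≠ 0) {D k : ℕ}
    (hlow : ∀ i, -(D : ℤ) ≤ m i) (hhigh : ∀ i, m i ≤ 1) (hk : D + 1 < k) :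
    ∮ w in C(0, 1), conj (laurentSum α m w) * laurentSum α m w ^ (-(k : ℤ)) *
      deriv (laurentSum α m) w = 0 := by
  set f := laurentSum α m
  set F := laurentSum (fun i => conj (α i)) (fun i => -m i)
  set f' := laurentSum (fun i => m i * α i) (fun i => m i - 1)
  have hF : F =O[cobounded ℂ] fun z => z ^ (D : ℤ) :=
    laurentSum_isBigO_zpow fun i => by linarith [hlow i]
  have hf' : f' =O[cobounded ℂ] fun _ => (1 : ℂ) := by
    simpa only [zpow_zero] using laurentSum_isBigO_zpow (α := fun i => m i * α i)
      (m := fun i => m i - 1) (n := 0) fun i => by linarith [hhigh i]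
  have hfk : (fun z => f z ^ (-(k : ℤ))) =O[cobounded ℂ] fun z => z ^ (-(k : ℤ)) := by
    refine (hequiv.zpow _).isBigO.trans <|
      ((isBigO_refl _ _).const_mul_left (c ^ (-(k : ℤ)))).congr_left fun z => ?_
    simp only [Pi.pow_apply, mul_zpow]
  have hdecay : Tendsto (fun z => z * (F z * f z ^ (-(k : ℤ)) * f' z)) (cobounded ℂ) (𝓝 0) := by
    have hO := (((isBigO_refl (fun z : ℂ => z) _).mul hF).mul hfk).mul hf'
    refine (hO.congr_left fun z => by ring).trans_tendsto
      ((tendsto_zpow_cobounded_nhds_zero (show (D : ℤ) + 1 - k < 0 by omega)).congr' ?_)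
    filter_upwards [eventually_cobounded_le_norm 1] with z hz
    have hz0 : z ≠ 0 := norm_ne_zero_iff.mp (by linarith)
    rw [mul_one, ← zpow_one_add₀ hz0, ← zpow_add₀ hz0]
    ring_nf
  refine (circleIntegral.integral_congr zero_le_one fun w hw => ?_).trans
    (circleIntegral_eq_zero_of_tendsto_mul_cobounded one_pos (fun z hz => ?_) hdecay)
  · have hw1 : ‖w‖ = 1 := mem_sphere_zero_iff_norm.mp hw
    have hw0 : w ≠ 0 := norm_ne_zero_iff.mp (by rw [hw1]; exact one_ne_zero)
    simp only [f, F, f', conj_laurentSum_of_norm_eq_one _ _ hw1,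
      (hasDerivAt_laurentSum α m hw0).deriv]
  · have hz0 : z ≠ 0 := norm_ne_zero_iff.mp (by linarith)
    exact ((differentiableAt_laurentSum _ _ hz0).mul
      ((differentiableAt_laurentSum _ _ hz0).zpow (Or.inl (hne z hz)))).mul
        (differentiableAt_laurentSum _ _ hz0)

end LaurentCurve

theorem stmt_8_general (d : ℕ) (r : ℝ) (hr : 0 < r) (a : Fin (d + 1) → ℂ)
    (h : ℂ → ℂ)
    (hh : h = fun w : ℂ => (r : ℂ) * w + ∑ j : Fin (d + 1), a j * w ^ (-(j : ℤ)))
    (hne : ∀ w : ℂ, 1 ≤ ‖w‖ → h w ≠ 0) :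
    (∀ k : ℕ, d + 1 < k →
      (2 * Real.pi * I * k)⁻¹ *
        (∮ w in C(0, 1), (starRingEnd ℂ) (h w) * (h w) ^ (-(k : ℤ)) * deriv h w) = 0) ∧
    (2 * I)⁻¹ * (∮ w in C(0, 1), (starRingEnd ℂ) (h w) * deriv h w) =
      ((Real.pi * (r ^ 2 - ∑ j : Fin (d + 1), (j : ℝ) * ‖a j‖ ^ 2) : ℝ) : ℂ) := by
  set α : Option (Fin (d + 1)) → ℂ := fun i => i.elim (r : ℂ) a
  set m : Option (Fin (d + 1)) → ℤ := fun i => i.elim 1 fun j => -(j : ℤ)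
  have hlaurent : h = laurentSum α m := by
    ext w
    rw [hh, laurentSum_option, zpow_one]
    rfl
  subst hlaurent
  refine ⟨fun k hk => ?_, ?_⟩
  · have hequiv : laurentSum α m ~[cobounded ℂ] fun z => (r : ℂ) * z := by
      rw [hh]
      exact isEquivalent_mul_add_laurentSum (ofReal_ne_zero.mpr hr.ne') fun j => by simp
    rw [circleIntegral_conj_mul_zpow_mul_deriv_laurentSum_eq_zero hequiv hne (D := d)
      (by rintro (_ | j) <;> simp only [m, Option.elim_none, Option.elim_some] <;> omega)
      (by rintro (_ | j) <;> simp only [m, Option.elim_none, Option.elim_some] <;> omega) hk,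
      mul_zero]
  · have hm : Function.Injective m := by
      rintro (_ | i) (_ | j) hij <;>
        simp only [m, Option.elim_none, Option.elim_some, Option.some.injEq, Fin.ext_iff]
          at hij ⊢ <;>
        omega
    have hsum : ∑ i, (m i : ℝ) * ‖α i‖ ^ 2 = r ^ 2 - ∑ j : Fin (d + 1), (j : ℝ) * ‖a j‖ ^ 2 := by
      simp [Fintype.sum_option, α, m, abs_of_pos hr, sub_eq_add_neg]
    rw [circleIntegral_conj_mul_deriv_laurentSum hm, hsum]
    push_cast
    field_simp [I_ne_zero]

/-- For a positively oriented polynomial curve of degree `d` encircling the origin,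
parametrized by `h(w) = rw + Σ_{j=0}^d a_j w^{-j}`, the exterior harmonic moments
`t_k = (1/(2πik)) ∮_γ z̄ z^{-k} dz` vanish for all `k > d+1`, and the enclosed area
`(1/(2i)) ∮_γ z̄ dz` equals `π t₀` with `t₀ = r² − Σ_{j=1}^d j|a_j|²`. -/
theorem stmt_8 (d : ℕ) (r : ℝ) (hr : 0 < r) (a : Fin (d + 1) → ℂ)
    (had : a (Fin.last d) ≠ 0)
    (h : ℂ → ℂ)
    (hh : h = fun w : ℂ => (r : ℂ) * w + ∑ j : Fin (d + 1), a j * w ^ (-(j : ℤ)))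
    (hinj : Set.InjOn h (Metric.sphere (0 : ℂ) 1))
    (hderiv : ∀ w : ℂ, 1 ≤ ‖w‖ → deriv h w ≠ 0)
    (hne : ∀ w : ℂ, 1 ≤ ‖w‖ → h w ≠ 0) :
    (∀ k : ℕ, d + 1 < k →
      (2 * Real.pi * I * k)⁻¹ *
        (∮ w in C(0, 1), (starRingEnd ℂ) (h w) * (h w) ^ (-(k : ℤ)) * deriv h w) = 0) ∧
    (2 * I)⁻¹ * (∮ w in C(0, 1), (starRingEnd ℂ) (h w) * deriv h w) =
      ((Real.pi * (r ^ 2 - ∑ j : Fin (d + 1), (j : ℝ) * ‖a j‖ ^ 2) : ℝ) : ℂ) :=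
  stmt_8_general d r hr a h hh hne
end

section
/- For every α ∈ [0,1], the function f(x) = (x−1)(1 + α/x) − (1+α) log x is non-negative on [1, ∞). -/
/-!
The expression is affine in `α` with slope `1 - x⁻¹ - log x ≤ 0`, so on `α ≤ 1` it is smallest at
`α = 1`, where it equals `x - x⁻¹ - 2 log x = 2 (sinh t - t)` for `t = log x ≥ 0`.
-/

open Real

theorem Real.two_mul_log_le_sub_inv {x : ℝ} (hx : 1 ≤ x) : 2 * log x ≤ x - x⁻¹ := by
  have hsinh : log x ≤ sinh (log x) := self_le_sinh_iff.mpr (log_nonneg hx)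
  rw [sinh_log (by positivity)] at hsinh
  linarith

/-- For every `α ∈ [0,1]`, the function `f(x) = (x-1)(1 + α/x) - (1+α) log x`
is non-negative on `[1, ∞)`. -/
theorem stmt_17 (α : ℝ) (hα : α ∈ Set.Icc (0 : ℝ) 1) (x : ℝ) (hx : 1 ≤ x) :
    0 ≤ (x - 1) * (1 + α / x) - (1 + α) * Real.log x := by
  have hx0 : 0 < x := by linarith
  have hslope : 1 - x⁻¹ - log x ≤ 0 := by linarith [one_sub_inv_le_log_of_pos hx0]
  have hsplit : (x - 1) * (1 + α / x) - (1 + α) * log x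
      = (x - x⁻¹ - 2 * log x) + (α - 1) * (1 - x⁻¹ - log x) := by
    field_simp
    ring
  rw [hsplit]
  have hvalue_at_one : 0 ≤ x - x⁻¹ - 2 * log x := by linarith [two_mul_log_le_sub_inv hx]
  have hcorrection : 0 ≤ (α - 1) * (1 - x⁻¹ - log x) :=
    mul_nonneg_of_nonpos_of_nonpos (by linarith [hα.2]) hslope
  exact add_nonneg hvalue_at_one hcorrection
end

section
/- Let (q_n)_{n≥0} be real polynomials with deg q_n = n, q₀ > 0, satisfying z q_n(z) = r_{n+1} q_{n+1}(z) + a_{n-d} q_{n-d}(z) for some d ∈ ℕ and positive reals r_n, a_n (with q_m = 0 for m < 0). Then each q_{j(d+1)+r} (0 ≤ r ≤ d) has the form z^r q̃(z^{d+1}) for a unique real polynomial q̃ of degree j, and q̃ has exactly j distinct, real, positive roots. -/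
/-!
Write `q n = X ^ (n % (d + 1)) * P n (X ^ (d + 1))`. The `P n` obey a recurrence of the same shape,
`X^ε * P n = r (n + 1) * P (n + 1) + a (n - d) * P (n - d)` with `ε = 1` exactly when
`d + 1 ∣ n + 1`, and `deg P n = n / (d + 1)`. By induction on `N`, every `P n` with `n ≤ N` has
`deg P n` simple positive roots, and the roots of `P m` and `P n` interlace whenever
`0 < n - m ≤ d`. For the step, evaluating the recurrence at a root of `P m`, `N + 1 - d ≤ m ≤ N`,
gives the sign of `P (N + 1)` there, since the interlacing hypotheses fix the signs of `P N` and
`P (N - d)`. Together with the signs at `0` and at `+∞`, the intermediate value theorem gives a root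
of `P (N + 1)` in each gap between the roots of `P m`, and the degree count says these are all.
-/

open Polynomial Finset

noncomputable section

lemma Nat.div_eq_or_eq_add_one_of_le_add {m n k : ℕ} (hk : 0 < k) (hmn : m ≤ n) (hnm : n ≤ m + k) :
    n / k = m / k ∨ n / k = m / k + 1 := by
  have h₁ : m / k ≤ n / k := Nat.div_le_div_right hmn
  have h₂ : n / k ≤ (m + k) / k := Nat.div_le_div_right hnm
  rw [Nat.add_div_right m hk] at h₂
  omega

namespace BandedRecurrence

def countAbove (s : Finset ℝ) (t : ℝ) : ℕ := #{x ∈ s | t < x}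

lemma countAbove_insert {s : Finset ℝ} {a t : ℝ} (ha : a ∉ s) :
    countAbove (insert a s) t = countAbove s t + if t < a then 1 else 0 := by
  unfold countAbove
  rw [filter_insert]
  split_ifs
  · exact card_insert_of_notMem fun hm => ha (mem_filter.1 hm).1
  · rfl

lemma countAbove_eq_zero {s : Finset ℝ} {t : ℝ} (h : ∀ x ∈ s, x ≤ t) : countAbove s t = 0 := by
  simpa [countAbove, filter_eq_empty_iff] using h

lemma countAbove_pos {s : Finset ℝ} {t x : ℝ} (hx : x ∈ s) (h : t < x) : 0 < countAbove s t :=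
  card_pos.2 ⟨x, mem_filter.2 ⟨hx, h⟩⟩

lemma neg_one_pow_countAbove_mul_prod_pos {s : Finset ℝ} {t : ℝ} (ht : t ∉ s) :
    0 < (-1) ^ countAbove s t * ∏ x ∈ s, (t - x) := by
  induction s using Finset.induction_on with
  | empty => simp [countAbove]
  | insert a s ha ih =>
    rw [mem_insert, not_or] at ht
    have hs := ih ht.2
    rw [countAbove_insert ha, prod_insert ha]
    rcases lt_or_gt_of_ne ht.1 with h | h
    · rw [if_pos h, pow_succ]
      nlinarith [sub_neg.2 h]
    · rw [if_neg h.not_gt, add_zero]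
      nlinarith [sub_pos.2 h]

structure HasPosRoots (F : ℝ[X]) (s : Finset ℝ) : Prop where
  leadingCoeff_pos : 0 < F.leadingCoeff
  card_eq : #s = F.natDegree
  pos : ∀ x ∈ s, 0 < x
  isRoot : ∀ x ∈ s, F.IsRoot x

namespace HasPosRoots

variable {F G : ℝ[X]} {s u : Finset ℝ}

lemma ne_zero (h : HasPosRoots F s) : F ≠ 0 :=
  leadingCoeff_ne_zero.1 h.leadingCoeff_pos.ne'

lemma roots_eq (h : HasPosRoots F s) : F.roots = s.val := by
  have hle : s.val ≤ F.roots := (Multiset.le_iff_subset s.nodup).2 fun x hx =>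
    (mem_roots h.ne_zero).2 (h.isRoot x hx)
  exact (Multiset.eq_of_le_of_card_le hle ((card_roots' F).trans_eq h.card_eq.symm)).symm

lemma isRoot_iff (h : HasPosRoots F s) {x : ℝ} : F.IsRoot x ↔ x ∈ s := by
  rw [← mem_roots h.ne_zero, h.roots_eq, mem_val]

lemma roots_toFinset (h : HasPosRoots F s) : F.roots.toFinset = s := by
  rw [h.roots_eq, val_toFinset]

lemma eval_eq (h : HasPosRoots F s) (t : ℝ) : F.eval t = F.leadingCoeff * ∏ x ∈ s, (t - x) := by
  conv_lhs => rw [← C_leadingCoeff_mul_prod_multiset_X_sub_C (p := F) (h.roots_eq ▸ h.card_eq)]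
  simp [h.roots_eq, eval_prod]

lemma sign_eval (h : HasPosRoots F s) {t : ℝ} (ht : t ∉ s) :
    0 < (-1) ^ countAbove s t * F.eval t := by
  rw [h.eval_eq, mul_left_comm]
  exact mul_pos h.leadingCoeff_pos (neg_one_pow_countAbove_mul_prod_pos ht)

lemma sign_eval_zero (h : HasPosRoots F s) : 0 < (-1) ^ F.natDegree * F.eval 0 := by
  have hc : countAbove s 0 = F.natDegree := by
    rw [countAbove, filter_true_of_mem h.pos, h.card_eq]
  simpa [hc] using h.sign_eval fun h0 => (h.pos 0 h0).false

lemma X_sub_C_mul (h : HasPosRoots G u) {z : ℝ} (hz : 0 < z) (hzu : z ∉ u) :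
    HasPosRoots ((X - C z) * G) (insert z u) where
  leadingCoeff_pos := by simpa [leadingCoeff_mul] using h.leadingCoeff_pos
  card_eq := by
    rw [card_insert_of_notMem hzu, natDegree_mul (X_sub_C_ne_zero z) h.ne_zero,
      natDegree_X_sub_C, h.card_eq, add_comm]
  pos := forall_mem_insert _ _ _ |>.2 ⟨hz, h.pos⟩
  isRoot := forall_mem_insert _ _ _ |>.2
    ⟨by simp, fun x hx => by simp [(h.isRoot x hx).eq_zero]⟩

end HasPosRoots

/-- Read downwards, the points of `s ∪ u` alternate, starting with a point of `u`. -/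
structure Interlaces (s u : Finset ℝ) : Prop where
  countAbove_left : ∀ y ∈ s, countAbove u y = countAbove s y + 1
  countAbove_right : ∀ z ∈ u, countAbove s z = countAbove u z

namespace Interlaces

variable {F G : ℝ[X]} {s u : Finset ℝ}

lemma notMem_right (h : Interlaces s u) {y : ℝ} (hy : y ∈ s) : y ∉ u := fun hyu => by
  have := h.countAbove_left y hy
  have := h.countAbove_right y hyu
  omega

lemma notMem_left (h : Interlaces s u) {z : ℝ} (hz : z ∈ u) : z ∉ s :=
  fun hzs => h.notMem_right hzs hz

lemma sign_eval_left (h : Interlaces s u) (hF : HasPosRoots F s) {z : ℝ} (hz : z ∈ u) :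
    0 < (-1) ^ countAbove u z * F.eval z := by
  rw [← h.countAbove_right z hz]
  exact hF.sign_eval (h.notMem_left hz)

lemma sign_eval_right (h : Interlaces s u) (hG : HasPosRoots G u) {y : ℝ} (hy : y ∈ s) :
    0 < (-1) ^ (countAbove s y + 1) * G.eval y := by
  rw [← h.countAbove_left y hy]
  exact hG.sign_eval (h.notMem_right hy)

lemma insert_insert (h : Interlaces s u) {y z : ℝ} (hs : ∀ x ∈ s, x < y) (hu : ∀ x ∈ u, x < y)
    (hyz : y < z) : Interlaces (insert y s) (insert z u) := by
  have hys : y ∉ s := fun hy => (hs y hy).false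
  have hzu : z ∉ u := fun hz => ((hu z hz).trans hyz).false
  constructor
  · refine (forall_mem_insert _ _ _).2 ⟨?_, fun x hx => ?_⟩
    · rw [countAbove_insert hzu, countAbove_insert hys, if_pos hyz, if_neg (lt_irrefl y),
        countAbove_eq_zero fun x hx => (hu x hx).le, countAbove_eq_zero fun x hx => (hs x hx).le]
    · rw [countAbove_insert hzu, countAbove_insert hys, if_pos ((hs x hx).trans hyz),
        if_pos (hs x hx), h.countAbove_left x hx]
  · refine (forall_mem_insert _ _ _).2 ⟨?_, fun x hx => ?_⟩
    · rw [countAbove_insert hzu, countAbove_insert hys, if_neg (lt_irrefl z), if_neg hyz.not_gt,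
        countAbove_eq_zero fun x hx => ((hu x hx).trans hyz).le,
        countAbove_eq_zero fun x hx => ((hs x hx).trans hyz).le]
    · rw [countAbove_insert hzu, countAbove_insert hys, if_pos ((hu x hx).trans hyz),
        if_pos (hu x hx), h.countAbove_right x hx]

lemma forall_lt_of_eval_pos (h : Interlaces s u) (hG : HasPosRoots G u) {y : ℝ}
    (hs : ∀ x ∈ s, x < y) (hy : 0 < G.eval y) : ∀ w ∈ u, w < y := by
  have hyu : y ∉ u := fun hyu => hy.ne' (hG.isRoot y hyu)
  -- a point of `u` above `y` has no point of `s`, hence no point of `u`, above it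
  have htop : ∀ w ∈ u, y < w → countAbove u w = 0 := fun w hw hyw => by
    rw [← h.countAbove_right w hw]
    exact countAbove_eq_zero fun x hx => ((hs x hx).trans hyw).le
  have hle : countAbove u y ≤ 1 := by
    refine card_le_one.2 fun w₁ h₁ w₂ h₂ => ?_
    rw [mem_filter] at h₁ h₂
    by_contra hne
    rcases lt_or_gt_of_ne hne with hlt | hlt
    · exact (countAbove_pos h₂.1 hlt).ne' (htop w₁ h₁.1 h₁.2)
    · exact (countAbove_pos h₁.1 hlt).ne' (htop w₂ h₂.1 h₂.2)
  have hzero : countAbove u y = 0 := by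
    have hsign := hG.sign_eval hyu
    rcases Nat.le_one_iff_eq_zero_or_eq_one.1 hle with h0 | h1
    · exact h0
    · rw [h1, pow_one] at hsign
      linarith
  intro w hw
  refine lt_of_not_ge fun hyw => ?_
  exact (countAbove_pos hw (lt_of_le_of_ne hyw fun e => hyu (e ▸ hw))).ne' hzero

end Interlaces

lemma exists_root_gt {G : ℝ[X]} (hlc : 0 < G.leadingCoeff) {t : ℝ} (ht : G.eval t < 0) :
    ∃ z, t < z ∧ G.IsRoot z := by
  have hdeg : 0 < G.degree := by
    by_contra h
    rw [eq_C_of_degree_le_zero (not_lt.1 h)] at hlc ht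
    simp only [leadingCoeff_C, eval_C] at hlc ht
    linarith
  obtain ⟨T, hT, htT⟩ := (((tendsto_atTop_of_leadingCoeff_nonneg G hdeg hlc.le).eventually_gt_atTop
    0).and (Filter.eventually_gt_atTop t)).exists
  obtain ⟨z, hz, hz0⟩ := intermediate_value_Icc htT.le G.continuous.continuousOn ⟨ht.le, hT.le⟩
  exact ⟨z, lt_of_le_of_ne hz.1 fun e => ht.ne (e ▸ hz0), hz0⟩

theorem exists_interlacing_roots (s : Finset ℝ) (hs : ∀ x ∈ s, 0 < x) (G : ℝ[X])
    (hlc : 0 < G.leadingCoeff) (hdeg : G.natDegree = #s ∨ G.natDegree = #s + 1)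
    (hsign : ∀ y ∈ s, 0 < (-1) ^ (countAbove s y + 1) * G.eval y)
    (hzero : 0 < (-1) ^ G.natDegree * G.eval 0) :
    ∃ u, HasPosRoots G u ∧ Interlaces s u := by
  induction s using Finset.induction_on_max generalizing G with
  | empty =>
    rcases hdeg with h0 | h1
    · exact ⟨∅, ⟨hlc, by simp [h0], by simp, by simp⟩, ⟨by simp, by simp⟩⟩
    · rw [card_empty] at h1
      rw [h1, pow_one, neg_one_mul, neg_pos] at hzero
      obtain ⟨z, hz, hGz⟩ := exists_root_gt hlc hzero
      exact ⟨{z}, ⟨hlc, by simp [h1], by simpa using hz, by simpa using hGz⟩,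
        ⟨by simp, by simp [countAbove, filter_singleton]⟩⟩
  | insert y s hlt ih =>
    have hys : y ∉ s := fun h => (hlt y h).false
    have hy : 0 < y := hs y (mem_insert_self y s)
    have hGy : G.eval y < 0 := by
      have := hsign y (mem_insert_self y s)
      rwa [countAbove_insert hys, if_neg (lt_irrefl y),
        countAbove_eq_zero fun x hx => (hlt x hx).le, pow_one, neg_one_mul, neg_pos] at this
    obtain ⟨z, hyz, hz⟩ := exists_root_gt hlc hGy
    set G' := G /ₘ (X - C z)
    have hG : G = (X - C z) * G' := (mul_divByMonic_eq_iff_isRoot.2 hz).symm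
    have hG' : G' ≠ 0 := fun h0 => hlc.ne' (by rw [hG, h0, mul_zero, leadingCoeff_zero])
    have heval : ∀ t, G.eval t = (t - z) * G'.eval t := fun t => by rw [hG]; simp
    have hdeg' : G.natDegree = G'.natDegree + 1 := by
      rw [hG, natDegree_mul (X_sub_C_ne_zero z) hG', natDegree_X_sub_C, add_comm]
    have hlc' : 0 < G'.leadingCoeff := by
      rwa [hG, leadingCoeff_mul, leadingCoeff_X_sub_C, one_mul] at hlc
    have hsign' : ∀ x ∈ s, 0 < (-1) ^ (countAbove s x + 1) * G'.eval x := fun x hx => by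
      have := hsign x (mem_insert_of_mem hx)
      rw [countAbove_insert hys, if_pos (hlt x hx), heval, pow_succ _ (_ + 1)] at this
      nlinarith [sub_neg.2 ((hlt x hx).trans hyz)]
    have hzero' : 0 < (-1) ^ G'.natDegree * G'.eval 0 := by
      rw [hdeg', heval, pow_succ] at hzero
      nlinarith [hy.trans hyz]
    obtain ⟨u, hu, hsu⟩ := ih (fun x hx => hs x (mem_insert_of_mem hx)) G' hlc'
      (by rw [card_insert_of_notMem hys] at hdeg; omega) hsign' hzero'
    have hu_lt : ∀ w ∈ u, w < y := hsu.forall_lt_of_eval_pos hu hlt <| by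
      nlinarith [heval y, sub_neg.2 hyz]
    refine ⟨insert z u, ?_, hsu.insert_insert hlt hu_lt hyz⟩
    rw [hG]
    exact hu.X_sub_C_mul (hy.trans hyz) fun h => ((hu_lt z h).trans hyz).false

structure ReducedRecurrence (d : ℕ) (r a : ℕ → ℝ) (P : ℕ → ℝ[X]) : Prop where
  natDegree_eq : ∀ n, (P n).natDegree = n / (d + 1)
  leadingCoeff_pos : ∀ n, 0 < (P n).leadingCoeff
  recurrence : ∀ n, (if d + 1 ∣ n + 1 then X else 1) * P n =
    C (r (n + 1)) * P (n + 1) + if d ≤ n then C (a (n - d)) * P (n - d) else 0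

namespace ReducedRecurrence

variable {d : ℕ} {r a : ℕ → ℝ} {P : ℕ → ℝ[X]}

lemma eval_rec (hP : ReducedRecurrence d r a P) (n : ℕ) (t : ℝ) :
    (if d + 1 ∣ n + 1 then t else 1) * (P n).eval t =
      r (n + 1) * (P (n + 1)).eval t + if d ≤ n then a (n - d) * (P (n - d)).eval t else 0 := by
  have h := congrArg (eval t) (hP.recurrence n)
  split_ifs at h ⊢ <;> simpa using h

lemma sign_eval_succ_of_mem (hP : ReducedRecurrence d r a P) (hr : ∀ n, 0 < r n)
    (ha : ∀ n, 0 < a n) {N m : ℕ} (hroots : ∀ n ≤ N, HasPosRoots (P n) (P n).roots.toFinset)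
    (hint : ∀ m n, m < n → n ≤ N → n ≤ m + d →
      Interlaces (P m).roots.toFinset (P n).roots.toFinset)
    (hmN : m ≤ N) (hNm : N + 1 ≤ m + d) {y : ℝ} (hy : y ∈ (P m).roots.toFinset) :
    0 < (-1) ^ (countAbove (P m).roots.toFinset y + 1) * (P (N + 1)).eval y := by
  set c := countAbove (P m).roots.toFinset y
  have hdN : d ≤ N := by
    by_contra h
    have hcard := (hroots m hmN).card_eq
    rw [hP.natDegree_eq, Nat.div_eq_of_lt (by omega), card_eq_zero] at hcard
    simp [hcard] at hy
  have hrec := hP.eval_rec N y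
  rw [if_pos hdN] at hrec
  have hfac : (0 : ℝ) < if d + 1 ∣ N + 1 then y else 1 := by
    split_ifs
    exacts [(hroots m hmN).pos y hy, one_pos]
  have hcur : 0 ≤ (-1) ^ (c + 1) * (P N).eval y := by
    rcases hmN.lt_or_eq with hlt | rfl
    · exact ((hint m N hlt le_rfl (by omega)).sign_eval_right (hroots N le_rfl) hy).le
    · simp [((hroots m le_rfl).isRoot y hy).eq_zero]
  have hlow : 0 < (-1) ^ c * (P (N - d)).eval y :=
    (hint (N - d) m (by omega) hmN (by omega)).sign_eval_left (hroots (N - d) (by omega)) hy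
  refine pos_of_mul_pos_right (a := r (N + 1)) ?_ (hr _).le
  have key : r (N + 1) * ((-1) ^ (c + 1) * (P (N + 1)).eval y) =
      (if d + 1 ∣ N + 1 then y else 1) * ((-1) ^ (c + 1) * (P N).eval y) +
        a (N - d) * ((-1) ^ c * (P (N - d)).eval y) := by
    rw [pow_succ]
    linear_combination (-1) ^ c * hrec
  rw [key]
  exact add_pos_of_nonneg_of_pos (mul_nonneg hfac.le hcur) (mul_pos (ha _) hlow)

lemma sign_eval_zero_succ (hP : ReducedRecurrence d r a P) (hr : ∀ n, 0 < r n)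
    (ha : ∀ n, 0 < a n) {N : ℕ} (hroots : ∀ n ≤ N, HasPosRoots (P n) (P n).roots.toFinset) :
    0 < (-1) ^ (P (N + 1)).natDegree * (P (N + 1)).eval 0 := by
  have hrec := hP.eval_rec N 0
  have hcur : 0 ≤ (if d + 1 ∣ N + 1 then (0 : ℝ) else 1) *
      ((-1) ^ (P (N + 1)).natDegree * (P N).eval 0) := by
    split_ifs with hdiv
    · simp
    · rw [one_mul, hP.natDegree_eq, Nat.succ_div, if_neg hdiv, add_zero, ← hP.natDegree_eq]
      exact (hroots N le_rfl).sign_eval_zero.le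
  refine pos_of_mul_pos_right (a := r (N + 1)) ?_ (hr _).le
  by_cases hdN : d ≤ N
  · rw [if_pos hdN] at hrec
    have hdeg : (P (N + 1)).natDegree = (P (N - d)).natDegree + 1 := by
      rw [hP.natDegree_eq, hP.natDegree_eq, ← Nat.add_div_right _ d.succ_pos]
      congr 1
      omega
    have hlow := (hroots (N - d) (by omega)).sign_eval_zero
    rw [hdeg] at hcur ⊢
    have key : r (N + 1) * ((-1) ^ ((P (N - d)).natDegree + 1) * (P (N + 1)).eval 0) =
        (if d + 1 ∣ N + 1 then (0 : ℝ) else 1) *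
          ((-1) ^ ((P (N - d)).natDegree + 1) * (P N).eval 0) +
          a (N - d) * ((-1) ^ (P (N - d)).natDegree * (P (N - d)).eval 0) := by
      rw [pow_succ]
      linear_combination (-1) ^ (P (N - d)).natDegree * hrec
    rw [key]
    exact add_pos_of_nonneg_of_pos hcur (mul_pos (ha _) hlow)
  · have hdiv : ¬ d + 1 ∣ N + 1 := fun h => hdN (by have := Nat.le_of_dvd N.succ_pos h; omega)
    rw [if_neg hdN, if_neg hdiv, add_zero, one_mul] at hrec
    have hdeg : (P (N + 1)).natDegree = (P N).natDegree := by
      rw [hP.natDegree_eq, hP.natDegree_eq, Nat.div_eq_of_lt (by omega), Nat.div_eq_of_lt (by omega)]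
    rw [hdeg, ← mul_assoc, mul_comm (r _), mul_assoc, ← hrec]
    exact (hroots N le_rfl).sign_eval_zero

theorem interlacing (hP : ReducedRecurrence d r a P) (hd : 0 < d) (hr : ∀ n, 0 < r n)
    (ha : ∀ n, 0 < a n) (N : ℕ) :
    (∀ n ≤ N, HasPosRoots (P n) (P n).roots.toFinset) ∧
      ∀ m n, m < n → n ≤ N → n ≤ m + d →
        Interlaces (P m).roots.toFinset (P n).roots.toFinset := by
  induction N with
  | zero =>
    refine ⟨fun n hn => ?_, fun m n hmn hn _ => by omega⟩
    obtain rfl : n = 0 := by omega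
    have h0 : HasPosRoots (P 0) ∅ :=
      ⟨hP.leadingCoeff_pos 0, by simp [hP.natDegree_eq], by simp, by simp⟩
    rwa [h0.roots_toFinset]
  | succ N ih =>
    obtain ⟨hroots, hint⟩ := ih
    have hstep : ∀ m ≤ N, N + 1 ≤ m + d →
        HasPosRoots (P (N + 1)) (P (N + 1)).roots.toFinset ∧
          Interlaces (P m).roots.toFinset (P (N + 1)).roots.toFinset := by
      intro m hmN hNm
      obtain ⟨u, hu, hmu⟩ := exists_interlacing_roots _ (hroots m hmN).pos (P (N + 1))
        (hP.leadingCoeff_pos _)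
        (by
          rw [(hroots m hmN).card_eq, hP.natDegree_eq, hP.natDegree_eq]
          exact Nat.div_eq_or_eq_add_one_of_le_add d.succ_pos (by omega) (by omega))
        (fun y hy => hP.sign_eval_succ_of_mem hr ha hroots hint hmN hNm hy)
        (hP.sign_eval_zero_succ hr ha hroots)
      rw [hu.roots_toFinset]
      exact ⟨hu, hmu⟩
    refine ⟨fun n hn => ?_, fun m n hmn hn hnm => ?_⟩
    · rcases Nat.le_succ_iff.1 hn with h | rfl
      exacts [hroots n h, (hstep N le_rfl (by omega)).1]
    · rcases Nat.le_succ_iff.1 hn with h | rfl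
      exacts [hint m n hmn h hnm, (hstep m (by omega) hnm).2]

end ReducedRecurrence

/-- The polynomial `P` with `q n = X ^ (n % (d + 1)) * P (X ^ (d + 1))`, computed by the recurrence
it inherits from `q`; `c` is the constant `q 0`. -/
def reduced (d : ℕ) (r a : ℕ → ℝ) (c : ℝ) : ℕ → ℝ[X]
  | 0 => C c
  | n + 1 => C (r (n + 1))⁻¹ * ((if d + 1 ∣ n + 1 then X else 1) * reduced d r a c n -
      if d ≤ n then C (a (n - d)) * reduced d r a c (n - d) else 0)

lemma reduced_recurrence {d : ℕ} {r a : ℕ → ℝ} (hr : ∀ n, r n ≠ 0) (c : ℝ) (n : ℕ) :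
    (if d + 1 ∣ n + 1 then X else 1) * reduced d r a c n =
      C (r (n + 1)) * reduced d r a c (n + 1) +
        if d ≤ n then C (a (n - d)) * reduced d r a c (n - d) else 0 := by
  rw [reduced.eq_2, ← mul_assoc, ← C_mul, mul_inv_cancel₀ (hr _), C_1, one_mul, sub_add_cancel]

lemma X_mul_X_pow_mod_mul_expand (d n : ℕ) (f : ℝ[X]) :
    X * (X ^ (n % (d + 1)) * expand ℝ (d + 1) f) =
      X ^ ((n + 1) % (d + 1)) * expand ℝ (d + 1) ((if d + 1 ∣ n + 1 then X else 1) * f) := by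
  split_ifs with hdiv
  · rw [Nat.mod_eq_zero_of_dvd hdiv, Nat.succ_mod_succ_eq_zero_iff.1 (Nat.mod_eq_zero_of_dvd hdiv),
      map_mul, expand_X]
    ring
  · have hmod : (n + 1) % (d + 1) = n % (d + 1) + 1 := by
      have h₁ := Nat.mod_add_div n (d + 1)
      have h₂ := Nat.mod_add_div (n + 1) (d + 1)
      rw [Nat.succ_div, if_neg hdiv, add_zero] at h₂
      omega
    rw [hmod, one_mul]
    ring

lemma eq_X_pow_mul_expand_reduced {d : ℕ} {q : ℕ → ℝ[X]} {r a : ℕ → ℝ}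
    (hq0 : (q 0).natDegree = 0) (hr : ∀ n, r n ≠ 0)
    (hrec : ∀ n, X * q n =
      C (r (n + 1)) * q (n + 1) + (if d ≤ n then C (a (n - d)) * q (n - d) else 0)) (n : ℕ) :
    q n = X ^ (n % (d + 1)) * expand ℝ (d + 1) (reduced d r a ((q 0).coeff 0) n) := by
  induction n using Nat.strong_induction_on with
  | _ n ih =>
    cases n with
    | zero => simpa [reduced] using eq_C_of_natDegree_eq_zero hq0
    | succ n =>
      refine mul_left_cancel₀ (C_ne_zero.2 (hr (n + 1))) ?_
      have hmod : d ≤ n → (n - d) % (d + 1) = (n + 1) % (d + 1) := fun h => by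
        rw [← Nat.add_mod_right (n - d)]
        congr 1
        omega
      set P := reduced d r a ((q 0).coeff 0)
      calc C (r (n + 1)) * q (n + 1)
          = X * q n - if d ≤ n then C (a (n - d)) * q (n - d) else 0 := by rw [hrec n]; ring
        _ = X * (X ^ (n % (d + 1)) * expand ℝ (d + 1) (P n)) - if d ≤ n then
              C (a (n - d)) * (X ^ ((n + 1) % (d + 1)) * expand ℝ (d + 1) (P (n - d))) else 0 := by
          rw [← ih n n.lt_succ_self]
          split_ifs with h
          · rw [← hmod h, ← ih (n - d) (by omega)]
          · rfl
        _ = X ^ ((n + 1) % (d + 1)) * expand ℝ (d + 1) (C (r (n + 1)) * P (n + 1)) := by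
          rw [X_mul_X_pow_mod_mul_expand, eq_sub_of_add_eq (reduced_recurrence hr _ n).symm]
          split_ifs <;> simp only [P, map_sub, map_mul, expand_C, sub_zero] <;> ring
        _ = C (r (n + 1)) * (X ^ ((n + 1) % (d + 1)) * expand ℝ (d + 1) (P (n + 1))) := by
          rw [map_mul, expand_C]
          ring

lemma leadingCoeff_pos_of_recurrence {d : ℕ} {q : ℕ → ℝ[X]} {r a : ℕ → ℝ}
    (hdeg : ∀ n, (q n).natDegree = n) (hq0 : 0 < (q 0).coeff 0) (hr : ∀ n, 0 < r n)
    (hrec : ∀ n, X * q n =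
      C (r (n + 1)) * q (n + 1) + (if d ≤ n then C (a (n - d)) * q (n - d) else 0)) (n : ℕ) :
    0 < (q n).leadingCoeff := by
  induction n with
  | zero => rwa [leadingCoeff, hdeg]
  | succ n ih =>
    have h := congrArg (coeff · (n + 1)) (hrec n)
    have hlow : (if d ≤ n then C (a (n - d)) * q (n - d) else 0).coeff (n + 1) = 0 := by
      split_ifs
      · rw [coeff_C_mul, coeff_eq_zero_of_natDegree_lt (by rw [hdeg]; omega), mul_zero]
      · exact coeff_zero _
    simp only [coeff_add, coeff_X_mul, coeff_C_mul, hlow, add_zero] at h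
    rw [leadingCoeff, hdeg, h] at ih
    rw [leadingCoeff, hdeg]
    exact pos_of_mul_pos_right ih (hr _).le

lemma reducedRecurrence_reduced {d : ℕ} {q : ℕ → ℝ[X]} {r a : ℕ → ℝ}
    (hdeg : ∀ n, (q n).natDegree = n) (hq0 : 0 < (q 0).coeff 0) (hr : ∀ n, 0 < r n)
    (hrec : ∀ n, X * q n =
      C (r (n + 1)) * q (n + 1) + (if d ≤ n then C (a (n - d)) * q (n - d) else 0)) :
    ReducedRecurrence d r a (reduced d r a ((q 0).coeff 0)) := by
  have hq := eq_X_pow_mul_expand_reduced (hdeg 0) (fun n => (hr n).ne') hrec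
  have hlc := leadingCoeff_pos_of_recurrence hdeg hq0 hr hrec
  have hlc_eq : ∀ n, (q n).leadingCoeff = (reduced d r a ((q 0).coeff 0) n).leadingCoeff := by
    intro n
    rw [hq, leadingCoeff_mul, leadingCoeff_X_pow, one_mul, leadingCoeff_expand d.succ_pos]
  refine ⟨fun n => ?_, fun n => hlc_eq n ▸ hlc n, reduced_recurrence (fun n => (hr n).ne') _⟩
  have hne : expand ℝ (d + 1) (reduced d r a ((q 0).coeff 0) n) ≠ 0 := by
    rw [Ne, ← leadingCoeff_eq_zero, leadingCoeff_expand d.succ_pos, ← hlc_eq]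
    exact (hlc n).ne'
  have h := hdeg n
  rw [hq, natDegree_X_pow_mul _ hne, natDegree_expand] at h
  calc _ = (n % (d + 1) + (reduced d r a ((q 0).coeff 0) n).natDegree * (d + 1)) / (d + 1) := by
        rw [Nat.add_mul_div_right _ _ d.succ_pos, Nat.div_eq_of_lt (Nat.mod_lt _ d.succ_pos),
          zero_add]
    _ = n / (d + 1) := by rw [add_comm, h]

end BandedRecurrence

end

open BandedRecurrence

/-- Let `(q_n)` be real polynomials with `deg q_n = n`, `q₀ > 0`, satisfying
`z q_n(z) = r_{n+1} q_{n+1}(z) + a_{n-d} q_{n-d}(z)` for some `d ∈ ℕ` and positive reals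
`r_n, a_n` (with `q_m = 0` for `m < 0`).  Then each `q_{j(d+1)+ρ}` (`0 ≤ ρ ≤ d`) has the form
`z^ρ q̃(z^{d+1})` for a unique real polynomial `q̃` of degree `j`, and `q̃` has exactly `j`
distinct, real, positive roots. -/
theorem stmt_19 (d : ℕ) (hd : 0 < d) (q : ℕ → Polynomial ℝ) (r a : ℕ → ℝ)
    (hdeg : ∀ n, (q n).natDegree = n)
    (hq0 : 0 < (q 0).coeff 0)
    (hr : ∀ n, 0 < r n) (ha : ∀ n, 0 < a n)
    (hrec : ∀ n, X * q n =
      C (r (n + 1)) * q (n + 1) + (if d ≤ n then C (a (n - d)) * q (n - d) else 0)) :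
    ∀ j ρ : ℕ, ρ ≤ d →
      ∃! qt : Polynomial ℝ,
        q (j * (d + 1) + ρ) = X ^ ρ * qt.comp (X ^ (d + 1)) ∧
        qt.natDegree = j ∧
        ∃ s : Finset ℝ, s.card = j ∧ (∀ x ∈ s, 0 < x) ∧
          {x : ℝ | qt.eval x = 0} = (s : Set ℝ) := by
  intro j ρ hρ
  have hq := eq_X_pow_mul_expand_reduced (hdeg 0) (fun n => (hr n).ne') hrec
  have hP := reducedRecurrence_reduced hdeg hq0 hr hrec
  have hmod : (j * (d + 1) + ρ) % (d + 1) = ρ := by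
    rw [add_comm, Nat.add_mul_mod_self_right, Nat.mod_eq_of_lt (by omega)]
  have hdiv : (j * (d + 1) + ρ) / (d + 1) = j := by
    rw [add_comm, Nat.add_mul_div_right _ _ d.succ_pos, Nat.div_eq_of_lt (by omega), zero_add]
  set P := reduced d r a ((q 0).coeff 0) (j * (d + 1) + ρ)
  have hroots : HasPosRoots P P.roots.toFinset := (hP.interlacing hd hr ha _).1 _ le_rfl
  refine ⟨P, ⟨by rw [hq, hmod, expand_eq_comp_X_pow], by rw [hP.natDegree_eq, hdiv], _,
    by rw [hroots.card_eq, hP.natDegree_eq, hdiv], hroots.pos, Set.ext fun x => hroots.isRoot_iff⟩,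
    fun qt hqt => ?_⟩
  refine expand_injective d.succ_pos (mul_left_cancel₀ (pow_ne_zero ρ X_ne_zero) ?_)
  rw [expand_eq_comp_X_pow, ← hqt.1, hq, hmod]
end
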